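/- For the four-state deterministic AND model (rows: states 00, 01, 10 map to 00; state 11 maps to 11), EI = 2 − (3/4)·log₂3 ≈ 0.81 bits, which is strictly less than 1 bit, the EI of the two-state coarse-grained model with identity TPM. -/

import Mathlib

open Real Finset

/-- KL divergence (in bits) of a distribution on `Fin N` against the uniform distribution. -/
noncomputable def klU {N : ℕ} (p : Fin N → ℝ) : ℝ :=
  ∑ i, p i * Real.logb 2 (p i / (1 / (N : ℝ)))

/-- Hoel's determinism coefficient of an N×N TPM. -/
noncomputable def determinism {N : ℕ} (T : Fin N → Fin N → ℝ) : ℝ :=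
  (1 / (N : ℝ)) * ∑ i, klU (T i) / Real.logb 2 N

/-- Hoel's degeneracy coefficient of an N×N TPM. -/
noncomputable def degeneracy {N : ℕ} (T : Fin N → Fin N → ℝ) : ℝ :=
  klU (fun j => (∑ i, T i j) / (N : ℝ)) / Real.logb 2 N

/-- Effective Information of an N×N TPM. -/
noncomputable def EI {N : ℕ} (T : Fin N → Fin N → ℝ) : ℝ :=
  Real.logb 2 N * (determinism T - degeneracy T)

/-- The four-state deterministic AND model: states 00, 01, 10 map to 00; 11 maps to 11. -/
noncomputable def andTPM : Fin 4 → Fin 4 → ℝ := fun i j =>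
  if i = 3 then (if j = 3 then 1 else 0) else (if j = 0 then 1 else 0)

/-- The coarse-grained two-state model: the 2×2 identity TPM. -/
noncomputable def idTPM2 : Fin 2 → Fin 2 → ℝ := fun i j => if i = j then 1 else 0

/-!
Every row of a deterministic TPM is a point mass, whose divergence from uniform is `log₂ N`; so the
determinism coefficient is `1` and `EI = log₂ N − D_KL(d ‖ uniform)`, where `d` is the distribution of
row targets. For AND, `d = (3/4, 0, 0, 1/4)` and the divergence is `(3/4)·log₂ 3`; for the identity `d`
is uniform and the divergence vanishes. The strict inequality is `3·log₂ 3 > 4`, i.e. `27 > 16`.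
-/

noncomputable def deterministicTPM {N : ℕ} (f : Fin N → Fin N) : Fin N → Fin N → ℝ :=
  fun i j => if f i = j then 1 else 0

noncomputable def targetDistrib {N : ℕ} (f : Fin N → Fin N) (j : Fin N) : ℝ :=
  (#{i | f i = j} : ℝ) / N

section Deterministic

variable {N : ℕ}

theorem logb_two_natCast_ne_zero (hN : 1 < N) : logb 2 N ≠ 0 :=
  (logb_pos one_lt_two (by exact_mod_cast hN)).ne'

theorem klU_indicator (a : Fin N) : klU (fun j => if a = j then (1 : ℝ) else 0) = logb 2 N := by
  simp [klU, apply_ite]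

theorem determinism_deterministicTPM (hN : 1 < N) (f : Fin N → Fin N) :
    determinism (deterministicTPM f) = 1 := by
  have hrow : ∀ i, klU (deterministicTPM f i) = logb 2 N := fun i => klU_indicator (f i)
  have hN0 : (N : ℝ) ≠ 0 := by positivity
  simp only [determinism, hrow, div_self (logb_two_natCast_ne_zero hN), sum_const, card_univ,
    Fintype.card_fin, nsmul_eq_mul, mul_one]
  field_simp

theorem degeneracy_deterministicTPM (f : Fin N → Fin N) :
    degeneracy (deterministicTPM f) = klU (targetDistrib f) / logb 2 N := by
  simp only [degeneracy, deterministicTPM, sum_boole]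
  rfl

theorem EI_deterministicTPM (hN : 1 < N) (f : Fin N → Fin N) :
    EI (deterministicTPM f) = logb 2 N - klU (targetDistrib f) := by
  rw [EI, determinism_deterministicTPM hN, degeneracy_deterministicTPM]
  field_simp [logb_two_natCast_ne_zero hN]

theorem klU_targetDistrib_of_bijective {f : Fin N → Fin N} (hf : f.Bijective) :
    klU (targetDistrib f) = 0 := by
  have hcard : ∀ j, #{i | f i = j} = 1 := fun j => by
    rw [card_eq_one]
    obtain ⟨i, hi, huniq⟩ := hf.existsUnique j
    exact ⟨i, by ext k; simpa using ⟨fun hk => huniq k hk, fun hk => hk ▸ hi⟩⟩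
  rcases eq_or_ne N 0 with hN | hN <;> simp [klU, targetDistrib, hcard, hN]

end Deterministic

theorem four_lt_three_mul_logb_two_three : 4 < 3 * logb 2 3 := by
  have h := logb_lt_logb (b := 2) one_lt_two (by norm_num : (0 : ℝ) < 2 ^ 4)
    (by norm_num : (2 : ℝ) ^ 4 < 3 ^ 3)
  rw [logb_pow, logb_pow, logb_self_eq_one one_lt_two] at h
  push_cast at h
  linarith

def andMap : Fin 4 → Fin 4 := fun i => if i = 3 then 3 else 0

theorem andTPM_eq : andTPM = deterministicTPM andMap := by
  ext i j
  fin_cases i <;> fin_cases j <;> simp [andTPM, deterministicTPM, andMap]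

theorem targetDistrib_andMap : targetDistrib andMap = ![3 / 4, 0, 0, 1 / 4] := by
  ext j
  fin_cases j <;> simp [targetDistrib, andMap, filter_ne', filter_eq'] <;> decide

theorem EI_andTPM : EI andTPM = 2 - (3 / 4) * logb 2 3 := by
  have hlog4 : logb 2 (4 : ℕ) = 2 := by
    rw [show ((4 : ℕ) : ℝ) = 2 ^ (2 : ℝ) by norm_num, logb_rpow two_pos one_lt_two.ne']
  rw [andTPM_eq, EI_deterministicTPM (by norm_num), targetDistrib_andMap, hlog4]
  simp [klU, Fin.sum_univ_four]

theorem EI_idTPM2 : EI idTPM2 = 1 := by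
  have hid : idTPM2 = deterministicTPM id := rfl
  rw [hid, EI_deterministicTPM one_lt_two, klU_targetDistrib_of_bijective Function.bijective_id]
  norm_num

/-- Hoel's canonical causal-emergence example: the microscopic AND model has
EI = 2 − (3/4)·log₂ 3 < 1, while the macroscopic identity model has EI = 1 bit. -/
theorem and_model_causal_emergence :
    EI andTPM = 2 - (3/4) * Real.logb 2 3 ∧
    EI andTPM < 1 ∧
    EI idTPM2 = 1 := by
  refine ⟨EI_andTPM, ?_, EI_idTPM2⟩
  rw [EI_andTPM]
  linarith [four_lt_three_mul_logb_two_three]
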